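/- Let k ≥ 1 be an integer and θ ∈ ℝ. Then the ridge polynomial U_k(θ;·) is orthogonal on the unit disk to every polynomial of lower degree: for every real polynomial Q in two variables of total degree at most k-1, ∫_{B²} U_k(θ;x) · Q(x) dx = 0, the integral taken over B² with respect to two-dimensional Lebesgue measure. -/

import Mathlib

open MeasureTheory Real
open intervalIntegral

/-- `chebU k` is the Chebyshev polynomial of the second kind of degree `k`,
evaluated as a real function. -/
noncomputable def chebU (k : ℕ) (x : ℝ) : ℝ :=
  (Polynomial.Chebyshev.U ℝ (k : ℤ)).eval x

/-- The ridge polynomial `U_k(θ; x) = U_k(x₁ cos θ + x₂ sin θ)`. -/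
noncomputable def ridge (k : ℕ) (θ : ℝ) (x : ℝ × ℝ) : ℝ :=
  chebU k (x.1 * Real.cos θ + x.2 * Real.sin θ)

/-- The closed unit disk in the plane. -/
def unitDisk : Set (ℝ × ℝ) := {x : ℝ × ℝ | x.1 ^ 2 + x.2 ^ 2 ≤ 1}

lemma trig_base (a : ℤ) (ha : 2 ≤ |a|) :
    ∫ φ in (0:ℝ)..π, Real.sin (a * φ) * Real.sin φ = 0 := by
  have h1 : (a : ℝ) - 1 ≠ 0 := by
    have : a ≠ 1 := by rcases abs_cases a with ⟨h,_⟩|⟨h,_⟩ <;> omega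
    intro h; apply this; exact_mod_cast sub_eq_zero.mp h
  have h2 : (a : ℝ) + 1 ≠ 0 := by
    have : a ≠ -1 := by rcases abs_cases a with ⟨h,_⟩|⟨h,_⟩ <;> omega
    intro h; apply this; exact_mod_cast eq_neg_of_add_eq_zero_left h
  set F : ℝ → ℝ := fun x => Real.sin (((a:ℝ) - 1) * x) / (2 * ((a:ℝ) - 1))
      - Real.sin (((a:ℝ) + 1) * x) / (2 * ((a:ℝ) + 1)) with hF
  have hderiv : ∀ x ∈ Set.uIcc (0:ℝ) π, HasDerivAt F (Real.sin (a * x) * Real.sin x) x := by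
    intro x _
    have m1 : HasDerivAt (fun y : ℝ => ((a:ℝ) - 1) * y) ((a:ℝ) - 1) x := by
      simpa using (hasDerivAt_id x).const_mul ((a:ℝ) - 1)
    have m2 : HasDerivAt (fun y : ℝ => ((a:ℝ) + 1) * y) ((a:ℝ) + 1) x := by
      simpa using (hasDerivAt_id x).const_mul ((a:ℝ) + 1)
    have d1 := m1.sin
    have d2 := m2.sin
    have := (d1.div_const (2 * ((a:ℝ) - 1))).sub (d2.div_const (2 * ((a:ℝ) + 1)))
    refine HasDerivAt.congr_deriv this ?_
    have e1 : ((a:ℝ) - 1) * x = (a:ℝ) * x - x := by ring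
    have e2 : ((a:ℝ) + 1) * x = (a:ℝ) * x + x := by ring
    rw [e1, e2, Real.cos_sub, Real.cos_add]
    field_simp
    ring
  have hcont : IntervalIntegrable (fun x => Real.sin (a * x) * Real.sin x) volume 0 π :=
    (Continuous.mul (by fun_prop) Real.continuous_sin).intervalIntegrable 0 π
  rw [intervalIntegral.integral_eq_sub_of_hasDerivAt hderiv hcont]
  have s1 : Real.sin (((a:ℝ) - 1) * π) = 0 := by
    have := Real.sin_int_mul_pi (a - 1); push_cast at this ⊢; exact this
  have s2 : Real.sin (((a:ℝ) + 1) * π) = 0 := by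
    have := Real.sin_int_mul_pi (a + 1); push_cast at this ⊢; exact this
  simp [hF, s1, s2]

lemma trig_pow (n : ℕ) : ∀ (a : ℤ), (n : ℤ) + 1 < |a| →
    ∫ φ in (0:ℝ)..π, Real.sin (a * φ) * Real.sin φ * Real.cos φ ^ n = 0 := by
  induction n with
  | zero =>
    intro a ha
    simpa using trig_base a (by omega)
  | succ n ih =>
    intro a ha
    have habs1 : |a| - 1 ≤ |a + 1| := by
      have := abs_sub_abs_le_abs_sub a (-1) ; simp at this
      simpa [sub_neg_eq_add] using this
    have habs2 : |a| - 1 ≤ |a - 1| := by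
      simpa using abs_sub_abs_le_abs_sub a 1
    have h1 := ih (a + 1) (by omega)
    have h2 := ih (a - 1) (by omega)
    push_cast at h1 h2
    have c1 : Continuous fun φ : ℝ =>
        (1/2 : ℝ) * (Real.sin (((a:ℝ)+1) * φ) * Real.sin φ * Real.cos φ ^ n) := by fun_prop
    have c2 : Continuous fun φ : ℝ =>
        (1/2 : ℝ) * (Real.sin (((a:ℝ)-1) * φ) * Real.sin φ * Real.cos φ ^ n) := by fun_prop
    have hptw : ∀ φ : ℝ, Real.sin (a * φ) * Real.sin φ * Real.cos φ ^ (n + 1)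
        = (1/2) * (Real.sin (((a:ℝ)+1) * φ) * Real.sin φ * Real.cos φ ^ n)
          + (1/2) * (Real.sin (((a:ℝ)-1) * φ) * Real.sin φ * Real.cos φ ^ n) := by
      intro φ
      have e1 : ((a:ℝ)+1) * φ = a * φ + φ := by ring
      have e2 : ((a:ℝ)-1) * φ = a * φ - φ := by ring
      rw [e1, e2, Real.sin_add, Real.sin_sub]
      ring
    rw [intervalIntegral.integral_congr (g := fun φ =>
        (1/2) * (Real.sin (((a:ℝ)+1) * φ) * Real.sin φ * Real.cos φ ^ n)
          + (1/2) * (Real.sin (((a:ℝ)-1) * φ) * Real.sin φ * Real.cos φ ^ n))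
        (fun φ _ => hptw φ)]
    rw [intervalIntegral.integral_add (c1.intervalIntegrable 0 π) (c2.intervalIntegrable 0 π),
      intervalIntegral.integral_const_mul, intervalIntegral.integral_const_mul]
    rw [h1, h2]; ring

lemma chebU_continuous (k : ℕ) : Continuous (chebU k) :=
  (Polynomial.Chebyshev.U ℝ (k : ℤ)).continuous

lemma cheb_orth (k n : ℕ) (h : n < k) :
    ∫ t in (-1:ℝ)..1, chebU k t * t ^ n * Real.sqrt (1 - t^2) = 0 := by
  have hg : Continuous fun t : ℝ => chebU k t * t ^ n * Real.sqrt (1 - t^2) := by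
    refine ((chebU_continuous k).mul (continuous_pow n)).mul ?_
    exact Real.continuous_sqrt.comp (by fun_prop)
  have hderiv : ∀ x ∈ Set.uIcc (0:ℝ) π, HasDerivAt Real.cos (-Real.sin x) x :=
    fun x _ => Real.hasDerivAt_cos x
  have hsub := intervalIntegral.integral_comp_smul_deriv hderiv
    (Continuous.continuousOn (by fun_prop)) hg
  simp only [Real.cos_zero, Real.cos_pi] at hsub
  -- hsub : ∫ x in 0..π, (-sin x) • g (cos x) = ∫ u in 1..(-1), g u
  have flip : ∫ t in (-1:ℝ)..1, chebU k t * t ^ n * Real.sqrt (1 - t^2)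
      = ∫ x in (0:ℝ)..π, Real.sin x * (chebU k (Real.cos x) * Real.cos x ^ n
          * Real.sqrt (1 - Real.cos x ^ 2)) := by
    rw [intervalIntegral.integral_symm 1 (-1), ← hsub]
    rw [← intervalIntegral.integral_neg]
    apply intervalIntegral.integral_congr
    intro x _
    simp [smul_eq_mul]
  rw [flip]
  have congr2 : ∀ x ∈ Set.uIcc (0:ℝ) π,
      Real.sin x * (chebU k (Real.cos x) * Real.cos x ^ n * Real.sqrt (1 - Real.cos x ^ 2))
      = Real.sin (((k:ℤ)+1) * x) * Real.sin x * Real.cos x ^ n := by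
    intro x hx
    rw [Set.uIcc_of_le Real.pi_pos.le] at hx
    have hs : Real.sin x ≥ 0 := Real.sin_nonneg_of_nonneg_of_le_pi hx.1 hx.2
    have hsqrt : Real.sqrt (1 - Real.cos x ^ 2) = Real.sin x := by
      rw [show (1 : ℝ) - Real.cos x ^ 2 = Real.sin x ^ 2 by
        have := Real.sin_sq_add_cos_sq x; linarith]
      exact Real.sqrt_sq hs
    have hU : chebU k (Real.cos x) * Real.sin x = Real.sin (((k:ℤ)+1) * x) := by
      have := Polynomial.Chebyshev.U_real_cos x (k : ℤ)
      simpa [chebU] using this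
    rw [hsqrt, ← hU]
    ring
  rw [intervalIntegral.integral_congr congr2]
  have := trig_pow n ((k:ℤ)+1) (by
    have : (0:ℤ) ≤ (k:ℤ) + 1 := by positivity
    rw [abs_of_nonneg this]; omega)
  push_cast at this ⊢
  exact this

lemma cheb_orth' (k q m : ℕ) (h : q + 2*m < k) :
    ∫ t in (-1:ℝ)..1, chebU k t * (t ^ q * (1 - t^2)^m * Real.sqrt (1 - t^2)) = 0 := by
  have expand : ∀ t : ℝ, chebU k t * (t ^ q * (1 - t^2)^m * Real.sqrt (1 - t^2))
      = ∑ j ∈ Finset.range (m+1), ((-1:ℝ)^j * (m.choose j : ℝ))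
          * (chebU k t * t ^ (q + 2*j) * Real.sqrt (1 - t^2)) := by
    intro t
    rw [show (1 - t^2 : ℝ) = -(t^2) + 1 by ring, add_pow]
    rw [Finset.mul_sum, Finset.sum_mul, Finset.mul_sum]
    apply Finset.sum_congr rfl
    intro j _
    rw [pow_add, pow_mul]
    ring
  rw [intervalIntegral.integral_congr (fun t _ => expand t)]
  rw [intervalIntegral.integral_finset_sum]
  · apply Finset.sum_eq_zero
    intro j hj
    rw [intervalIntegral.integral_const_mul, cheb_orth k (q + 2*j)
      (by simp at hj; omega), mul_zero]
  · intro j _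
    apply Continuous.intervalIntegrable
    have : Continuous fun t : ℝ => Real.sqrt (1 - t^2) :=
      Real.continuous_sqrt.comp (by fun_prop)
    exact continuous_const.mul (((chebU_continuous k).mul (continuous_pow _)).mul this)

lemma unitDisk_isClosed : IsClosed unitDisk := isClosed_le (by fun_prop) continuous_const

lemma unitDisk_isCompact : IsCompact unitDisk := by
  apply Metric.isCompact_of_isClosed_isBounded unitDisk_isClosed
  apply (Metric.isBounded_closedBall (x := ((0,0) : ℝ × ℝ)) (r := 1)).subset
  intro x hx
  have hx' : x.1 ^ 2 + x.2 ^ 2 ≤ 1 := hx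
  simp only [Metric.mem_closedBall, Prod.dist_eq]
  apply max_le <;> rw [Real.dist_eq, sub_zero, abs_le] <;> constructor <;> nlinarith

lemma integrableOn_disk {f : ℝ × ℝ → ℝ} (hf : Continuous f) : IntegrableOn f unitDisk volume :=
  hf.continuousOn.integrableOn_compact unitDisk_isCompact

lemma disk_mono (k : ℕ) (p q : ℕ) (h : q + p < k) :
    ∫ x in unitDisk, chebU k x.1 * (x.1 ^ q * x.2 ^ p) = 0 := by
  set g : ℝ × ℝ → ℝ := fun x => chebU k x.1 * (x.1 ^ q * x.2 ^ p) with hg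
  have hgc : Continuous g :=
    ((chebU_continuous k).comp continuous_fst).mul (by fun_prop)
  set r : ℝ → ℝ := fun s => Real.sqrt (1 - s^2) with hr
  have hrc : Continuous r := Real.continuous_sqrt.comp (by fun_prop)
  set h0 : ℝ → ℝ := fun s =>
      chebU k s * s ^ q * ((r s ^ (p+1) - (-r s) ^ (p+1)) / (p+1)) with hh0
  -- inner integral computation
  have inner : ∀ s : ℝ, (∫ y, (unitDisk.indicator g) (s, y)) = h0 s := by
    intro s
    have hsec : (fun y => (unitDisk.indicator g) (s, y))
        = {y : ℝ | s^2 + y^2 ≤ 1}.indicator (fun y => g (s, y)) := by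
      ext y
      by_cases hy : s^2 + y^2 ≤ 1 <;>
        simp [Set.indicator, unitDisk, hy]
    have hsecm : MeasurableSet {y : ℝ | s^2 + y^2 ≤ 1} :=
      (isClosed_le (by fun_prop) continuous_const).measurableSet
    rw [hsec, MeasureTheory.integral_indicator hsecm]
    by_cases hs : s^2 ≤ 1
    · have h1 : (0:ℝ) ≤ 1 - s^2 := by linarith
      have hset : {y : ℝ | s^2 + y^2 ≤ 1} = Set.Icc (-(r s)) (r s) := by
        ext y
        simp only [Set.mem_setOf_eq, Set.mem_Icc]
        constructor
        · intro hy
          have hy2 : y^2 ≤ 1 - s^2 := by linarith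
          have hab : |y| ≤ r s := by
            rw [hr, ← Real.sqrt_sq_eq_abs]; exact Real.sqrt_le_sqrt hy2
          exact abs_le.mp hab
        · rintro ⟨ha, hb⟩
          have hab : |y| ≤ r s := abs_le.mpr ⟨ha, hb⟩
          have : |y|^2 ≤ (r s)^2 := by
            apply pow_le_pow_left₀ (abs_nonneg y) hab
          rw [sq_abs] at this
          rw [hr] at this
          rw [Real.sq_sqrt h1] at this
          linarith
      rw [hset, MeasureTheory.integral_Icc_eq_integral_Ioc,
        ← intervalIntegral.integral_of_le (by linarith [Real.sqrt_nonneg (1 - s^2), (neg_nonpos.mpr (Real.sqrt_nonneg (1 - s^2)))] : -(r s) ≤ r s)]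
      have : ∀ y : ℝ, g (s, y) = (chebU k s * s ^ q) * y ^ p := fun y => by
        simp only [hg]; ring
      simp only [this]
      rw [intervalIntegral.integral_const_mul, integral_pow]
    · have hset : {y : ℝ | s^2 + y^2 ≤ 1} = ∅ := by
        ext y; simp only [Set.mem_setOf_eq, Set.mem_empty_iff_false, iff_false]
        intro hy; nlinarith [sq_nonneg y]
      have hrz : r s = 0 := Real.sqrt_eq_zero_of_nonpos (by nlinarith)
      rw [hset]
      simp [hh0, hrz, zero_pow (Nat.succ_ne_zero p)]
  -- Fubini
  have hint : IntegrableOn g unitDisk volume := integrableOn_disk hgc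
  rw [← MeasureTheory.integral_indicator unitDisk_isClosed.measurableSet]
  rw [MeasureTheory.Measure.volume_eq_prod]
  rw [MeasureTheory.integral_prod]
  swap
  · rw [← MeasureTheory.Measure.volume_eq_prod]
    exact (integrable_indicator_iff unitDisk_isClosed.measurableSet).mpr hint
  simp only [← hg, inner]
  -- outer integral
  have houter0 : ∀ s : ℝ, s ∉ Set.Icc (-1:ℝ) 1 → h0 s = 0 := by
    intro s hs
    simp only [Set.mem_Icc, not_and_or, not_le] at hs
    have : ¬ (s^2 ≤ 1) := by rcases hs with hs | hs <;> nlinarith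
    have hrz : r s = 0 := Real.sqrt_eq_zero_of_nonpos (by nlinarith)
    simp [hh0, hrz, zero_pow (Nat.succ_ne_zero p)]
  rw [← MeasureTheory.setIntegral_eq_integral_of_forall_compl_eq_zero houter0]
  rw [MeasureTheory.integral_Icc_eq_integral_Ioc,
    ← intervalIntegral.integral_of_le (by norm_num : (-1:ℝ) ≤ 1)]
  rcases Nat.even_or_odd p with hp | hp
  · -- p even, p = m + m
    obtain ⟨m, hm⟩ := hp
    have hodd : Odd (p + 1) := by rw [hm]; exact ⟨m, by ring⟩
    have congr3 : ∀ s ∈ Set.uIcc (-1:ℝ) 1, h0 s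
        = (2 / (p+1 : ℝ)) * (chebU k s * (s ^ q * (1 - s^2)^m * Real.sqrt (1 - s^2))) := by
      intro s hs
      rw [Set.uIcc_of_le (by norm_num)] at hs
      have h1 : (0:ℝ) ≤ 1 - s^2 := by
        rcases Set.mem_Icc.mp hs with ⟨ha, hb⟩; nlinarith
      have hrp : r s ^ (p + 1) = (1 - s^2)^m * Real.sqrt (1 - s^2) := by
        rw [hr, show p + 1 = 2*m + 1 by omega, pow_succ, pow_mul, Real.sq_sqrt h1]
      simp only [hh0]
      rw [hodd.neg_pow, hrp]
      ring
    rw [intervalIntegral.integral_congr congr3, intervalIntegral.integral_const_mul,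
      cheb_orth' k q m (by omega), mul_zero]
  · -- p odd : h0 = 0
    have heven : Even (p + 1) := hp.add_one
    have : ∀ s ∈ Set.uIcc (-1:ℝ) 1, h0 s = (0:ℝ) := by
      intro s _
      simp only [hh0, Even.neg_pow heven]
      simp
    rw [intervalIntegral.integral_congr this]
    simp

/-- Rotation of the plane by angle `θ` as a linear equivalence. -/
noncomputable def rotL (θ : ℝ) : (ℝ × ℝ) ≃ₗ[ℝ] (ℝ × ℝ) where
  toFun x := (x.1 * Real.cos θ - x.2 * Real.sin θ, x.1 * Real.sin θ + x.2 * Real.cos θ)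
  invFun x := (x.1 * Real.cos θ + x.2 * Real.sin θ, -x.1 * Real.sin θ + x.2 * Real.cos θ)
  map_add' x y := by simp [Prod.ext_iff]; constructor <;> ring
  map_smul' c x := by simp [Prod.ext_iff, Prod.smul_fst, Prod.smul_snd, smul_eq_mul]
                      constructor <;> ring
  left_inv x := by
    have h := Real.sin_sq_add_cos_sq θ
    simp only [Prod.ext_iff]
    exact ⟨by linear_combination x.1 * h, by linear_combination x.2 * h⟩
  right_inv x := by
    have h := Real.sin_sq_add_cos_sq θ
    simp only [Prod.ext_iff]
    exact ⟨by linear_combination x.1 * h, by linear_combination x.2 * h⟩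

lemma rotL_apply (θ : ℝ) (x : ℝ × ℝ) :
    rotL θ x = (x.1 * Real.cos θ - x.2 * Real.sin θ, x.1 * Real.sin θ + x.2 * Real.cos θ) := by simp [rotL]

lemma rotL_det (θ : ℝ) : LinearMap.det ((rotL θ) : (ℝ × ℝ) →ₗ[ℝ] (ℝ × ℝ)) = 1 := by
  rw [← LinearMap.det_toMatrix (Module.Basis.finTwoProd ℝ), Matrix.det_fin_two]
  simp only [LinearMap.toMatrix_apply, Module.Basis.finTwoProd_zero, Module.Basis.finTwoProd_one,
    Module.Basis.coe_finTwoProd_repr, LinearEquiv.coe_coe]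
  simp [rotL_apply]
  nlinarith [Real.sin_sq_add_cos_sq θ]

lemma rotL_continuous (θ : ℝ) : Continuous (rotL θ) := by
  have : ⇑(rotL θ) = fun x : ℝ × ℝ =>
      (x.1 * Real.cos θ - x.2 * Real.sin θ, x.1 * Real.sin θ + x.2 * Real.cos θ) := by simp [rotL]
  rw [this]; fun_prop

lemma rotL_measurePreserving (θ : ℝ) :
    MeasurePreserving (rotL θ) (volume : Measure (ℝ × ℝ)) volume := by
  refine ⟨(rotL_continuous θ).measurable, ?_⟩
  have := Measure.map_linearMap_addHaar_eq_smul_addHaar (volume : Measure (ℝ × ℝ))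
    (f := ((rotL θ) : (ℝ × ℝ) →ₗ[ℝ] (ℝ × ℝ))) (by rw [rotL_det]; norm_num)
  simpa [rotL_det] using this

lemma rotL_preimage_disk (θ : ℝ) : (rotL θ) ⁻¹' unitDisk = unitDisk := by
  ext x
  simp only [Set.mem_preimage, unitDisk, Set.mem_setOf_eq, rotL_apply]
  constructor <;> intro hx <;> nlinarith [Real.sin_sq_add_cos_sq θ, hx]

lemma ridge_continuous (k : ℕ) (θ : ℝ) : Continuous (ridge k θ) :=
  (chebU_continuous k).comp (by fun_prop)

lemma mono_rot (k : ℕ) (θ : ℝ) (a b : ℕ) (h : a + b < k) :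
    ∫ x in unitDisk, ridge k θ x * (x.1 ^ a * x.2 ^ b) = 0 := by
  have hpyth := Real.sin_sq_add_cos_sq θ
  set F : ℝ × ℝ → ℝ := fun y => ridge k θ y * (y.1 ^ a * y.2 ^ b) with hF
  have emb : MeasurableEmbedding (rotL θ) := by
    have := (rotL θ).toContinuousLinearEquiv.toHomeomorph.measurableEmbedding
    rwa [show ⇑(rotL θ).toContinuousLinearEquiv.toHomeomorph = ⇑(rotL θ) from
      LinearEquiv.coe_toContinuousLinearEquiv' _] at this
  have key := (rotL_measurePreserving θ).setIntegral_preimage_emb emb F unitDisk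
  rw [rotL_preimage_disk] at key
  rw [← key]
  have hptw : ∀ x : ℝ × ℝ, F (rotL θ x)
      = ∑ i ∈ Finset.range (a+1), ∑ j ∈ Finset.range (b+1),
          ((Real.cos θ ^ i * (-Real.sin θ) ^ (a-i) * (a.choose i : ℝ))
            * (Real.sin θ ^ j * Real.cos θ ^ (b-j) * (b.choose j : ℝ)))
          * (chebU k x.1 * (x.1 ^ (i+j) * x.2 ^ ((a-i)+(b-j)))) := by
    intro x
    rw [hF]
    simp only [rotL_apply, ridge]
    have harg : (x.1 * Real.cos θ - x.2 * Real.sin θ) * Real.cos θ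
        + (x.1 * Real.sin θ + x.2 * Real.cos θ) * Real.sin θ = x.1 := by
      linear_combination x.1 * hpyth
    rw [harg]
    rw [show x.1 * Real.cos θ - x.2 * Real.sin θ
        = x.1 * Real.cos θ + -(x.2 * Real.sin θ) by ring]
    rw [add_pow, add_pow, Finset.sum_mul_sum, Finset.mul_sum]
    apply Finset.sum_congr rfl
    intro i hi
    rw [Finset.mul_sum]
    apply Finset.sum_congr rfl
    intro j hj
    rw [mul_pow, mul_pow, neg_pow (x.2 * Real.sin θ), mul_pow]
    rw [pow_add, pow_add]
    ring
  simp only [hptw]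
  simp_rw [← Finset.sum_product']
  have hcont : ∀ (c : ℝ) (e1 e2 : ℕ), Continuous fun x : ℝ × ℝ =>
      c * (chebU k x.1 * (x.1 ^ e1 * x.2 ^ e2)) := fun c e1 e2 =>
    continuous_const.mul (((chebU_continuous k).comp continuous_fst).mul (by fun_prop))
  rw [MeasureTheory.integral_finset_sum _
    (fun p _ => integrableOn_disk (hcont _ _ _))]
  apply Finset.sum_eq_zero
  intro p hp
  rw [Finset.mem_product, Finset.mem_range, Finset.mem_range] at hp
  rw [MeasureTheory.integral_const_mul, disk_mono k ((a - p.1) + (b - p.2)) (p.1 + p.2)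
    (by omega), mul_zero]

/-- The ridge polynomial `U_k(θ; ·)` is orthogonal on the unit disk to every
bivariate polynomial of total degree at most `k - 1`. -/
theorem ridge_orthogonal (k : ℕ) (hk : 1 ≤ k) (θ : ℝ) (Q : MvPolynomial (Fin 2) ℝ)
    (hQ : Q.totalDegree ≤ k - 1) :
    ∫ x in unitDisk, ridge k θ x * MvPolynomial.eval ![x.1, x.2] Q = 0 := by
  have hQsum : ∀ x : ℝ × ℝ, MvPolynomial.eval ![x.1, x.2] Q
      = ∑ m ∈ Q.support, MvPolynomial.coeff m Q * (x.1 ^ m 0 * x.2 ^ m 1) := by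
    intro x
    conv_lhs => rw [Q.as_sum]
    rw [map_sum]
    apply Finset.sum_congr rfl
    intro m _
    rw [MvPolynomial.eval_monomial]
    rw [Finsupp.prod_fintype _ _ (fun i => pow_zero _)]
    rw [Fin.prod_univ_two]
    simp
  have step : (fun x : ℝ × ℝ => ridge k θ x * MvPolynomial.eval ![x.1, x.2] Q)
      = fun x => ∑ m ∈ Q.support,
          MvPolynomial.coeff m Q * (ridge k θ x * (x.1 ^ m 0 * x.2 ^ m 1)) := by
    funext x
    rw [hQsum x, Finset.mul_sum]
    exact Finset.sum_congr rfl fun m _ => by ring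
  rw [step]
  rw [MeasureTheory.integral_finset_sum _ (f := fun m x => MvPolynomial.coeff m Q * (ridge k θ x * (x.1 ^ m 0 * x.2 ^ m 1))) (fun m _ => integrableOn_disk
    (continuous_const.mul ((ridge_continuous k θ).mul (by fun_prop))))]
  apply Finset.sum_eq_zero
  intro m hm
  have hdeg : m 0 + m 1 ≤ k - 1 := by
    have h1 : (m.sum fun _ e => e) ≤ Q.totalDegree := MvPolynomial.le_totalDegree hm
    have h2 : (m.sum fun _ e => e) = m 0 + m 1 := by
      rw [Finsupp.sum_fintype _ _ (fun i => rfl), Fin.sum_univ_two]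
    omega
  rw [MeasureTheory.integral_const_mul, mono_rot k θ (m 0) (m 1) (by omega), mul_zero]
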